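/- Log-space representation of the geometric log-sum-exp: assume the kernel matrix K = (exp(−c_{ij}/2))_{i,j} is positive definite. For every f ∈ ℝ^d, Ω_C^*(f) = sup_{l ∈ ℝ^d} ( −log Σ_{i,j=1}^d exp(l_i + l_j − (f_i + f_j + c_{ij})/2) + 2 log Σ_{i=1}^d exp(l_i) ). -/

import Mathlib

/-!
`Φ_C(·, f)` is continuous and positive on the compact simplex, so it attains a positive
minimum there. Since `Φ_C(·, f)` is a quadratic form, the objective at `l` equals
`-log Φ_C(softmax l, f)`, and `softmax` maps `ℝ^d` onto the points of the simplex with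
positive coordinates, which are dense in it; by continuity the supremum is `-log min Φ_C`.
-/

open Finset Real Filter

noncomputable section

/-- The probability simplex in `ℝ^d`. -/
def simplexS (d : ℕ) : Set (Fin d → ℝ) := stdSimplex ℝ (Fin d)


open scoped Classical

/-- `Φ_C(α,f) = Σ_{i,j} α_i α_j exp(-(f_i + f_j + c_{ij})/2)`. -/
def Phi {d : ℕ} (C : Matrix (Fin d) (Fin d) ℝ) (α f : Fin d → ℝ) : ℝ :=
  ∑ i, ∑ j, α i * α j * Real.exp (-(f i + f j + C i j) / 2)

/-- The geometric log-sum-exp `Ω_C^*(f) = -log min_{α ∈ △^d} Φ_C(α, f)`. -/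
def OmegaStar {d : ℕ} (C : Matrix (Fin d) (Fin d) ℝ) (f : Fin d → ℝ) : ℝ :=
  -Real.log (sInf ((fun α => Phi C α f) '' simplexS d))

/-- The geometric softmax: the (unique, when the kernel is positive definite) minimizer of
`Φ_C(·, f)` over the simplex. -/
def gsoftmax {d : ℕ} (C : Matrix (Fin d) (Fin d) ℝ) (f : Fin d → ℝ) : Fin d → ℝ :=
  if h : ∃ α ∈ simplexS d, IsMinOn (fun β => Phi C β f) (simplexS d) α
  then h.choose else fun _ => 0

/-- The soft C-transform `T(f,α)_i = -2 log Σ_j α_j exp((f_j - c_{ij})/2)`. -/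
def Tsoft {d : ℕ} (C : Matrix (Fin d) (Fin d) ℝ) (f α : Fin d → ℝ) : Fin d → ℝ :=
  fun i => -2 * Real.log (∑ j, α j * Real.exp ((f j - C i j) / 2))

/-- `f` is the symmetric Sinkhorn potential of `α`: `-f = T(-f, α)`. -/
def IsSinkhornPotential {d : ℕ} (C : Matrix (Fin d) (Fin d) ℝ) (α f : Fin d → ℝ) : Prop :=
  -f = Tsoft C (-f) α

/-- The symmetric Sinkhorn potential `∇Ω(α)`: the (unique, when the kernel is positive
definite) `f` with `-f = T(-f, α)`. -/
def gradOmega {d : ℕ} (C : Matrix (Fin d) (Fin d) ℝ) (α : Fin d → ℝ) : Fin d → ℝ :=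
  if h : ∃ f : Fin d → ℝ, IsSinkhornPotential C α f then h.choose else fun _ => 0

/-- The extrapolation `f^E = -T(-(f - Ω_C^*(f)·1), g-softmax(f)) + Ω_C^*(f)·1`. -/
def extrap {d : ℕ} (C : Matrix (Fin d) (Fin d) ℝ) (f : Fin d → ℝ) : Fin d → ℝ :=
  fun i => -(Tsoft C (fun j => -(f j - OmegaStar C f)) (gsoftmax C f) i) + OmegaStar C f

/-- The kernel matrix `K = (exp(-c_{ij}/2))_{ij}`. -/
def kernelK {d : ℕ} (C : Matrix (Fin d) (Fin d) ℝ) : Matrix (Fin d) (Fin d) ℝ :=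
  Matrix.of fun i j => Real.exp (-(C i j) / 2)

open Set

section Softmax

variable {ι : Type*} [Fintype ι]

def softmax (l : ι → ℝ) : ι → ℝ := fun i => exp (l i) / ∑ k, exp (l k)

lemma sum_exp_pos [Nonempty ι] (l : ι → ℝ) : 0 < ∑ k, exp (l k) :=
  Finset.sum_pos (fun _ _ => exp_pos _) univ_nonempty

lemma softmax_mem_stdSimplex [Nonempty ι] (l : ι → ℝ) : softmax l ∈ stdSimplex ℝ ι :=
  ⟨fun i => div_nonneg (exp_pos _).le (sum_exp_pos l).le,
    by simp only [softmax, ← Finset.sum_div, div_self (sum_exp_pos l).ne']⟩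

lemma softmax_log {x : ι → ℝ} (hx : x ∈ stdSimplex ℝ ι) (hpos : ∀ i, 0 < x i) :
    softmax (fun i => log (x i)) = x := by
  funext i
  simp only [softmax, exp_log (hpos _), hx.2, div_one]

lemma closure_range_softmax [Nonempty ι] : closure (range softmax) = stdSimplex ℝ ι := by
  refine (closure_minimal (range_subset_iff.2 softmax_mem_stdSimplex)
    (isClosed_stdSimplex ℝ ι)).antisymm fun x hx => ?_
  -- Every open segment from `x` to the barycenter consists of points with positive coordinates.
  set b : ι → ℝ := (stdSimplex.barycenter : stdSimplex ℝ ι).val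
  have hsegment : openSegment ℝ x b ⊆ range softmax := by
    rintro y hy
    have hyS : y ∈ stdSimplex ℝ ι :=
      (convex_stdSimplex ℝ ι).openSegment_subset hx stdSimplex.barycenter.2 hy
    obtain ⟨s, t, hs, ht, -, rfl⟩ := hy
    refine ⟨_, softmax_log hyS fun i => ?_⟩
    have hbi : 0 < b i := by simp [b, Fintype.card_pos]
    simpa using add_pos_of_nonneg_of_pos (mul_nonneg hs.le (hx.1 i)) (mul_pos ht hbi)
  exact closure_mono hsegment (segment_subset_closure_openSegment (left_mem_segment ℝ x b))

lemma isLUB_range_comp_softmax [Nonempty ι] {h : (ι → ℝ) → ℝ}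
    (hh : ContinuousOn h (stdSimplex ℝ ι)) {a : ℝ} (ha : IsLUB (h '' stdSimplex ℝ ι) a) :
    IsLUB (range fun l => h (softmax l)) a := by
  rw [range_comp' h softmax]
  rw [← closure_range_softmax] at hh ha
  exact (isLUB_iff_of_subset_of_subset_closure (image_mono subset_closure)
    (hh.image_closure)).2 ha

end Softmax

section Phi

variable {d : ℕ} (C : Matrix (Fin d) (Fin d) ℝ) (f : Fin d → ℝ)

lemma continuous_Phi : Continuous fun α => Phi C α f := by
  unfold Phi
  fun_prop

lemma Phi_pos {α : Fin d → ℝ} (hα : α ∈ simplexS d) : 0 < Phi C α f := by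
  obtain ⟨i, hi⟩ : ∃ i, 0 < α i := by
    by_contra! h
    simpa [le_antisymm (h _) (hα.1 _)] using hα.2
  have hterm (i j : Fin d) : 0 ≤ α i * α j * exp (-(f i + f j + C i j) / 2) :=
    mul_nonneg (mul_nonneg (hα.1 i) (hα.1 j)) (exp_pos _).le
  exact Finset.sum_pos' (fun i _ => Finset.sum_nonneg fun j _ => hterm i j)
    ⟨i, mem_univ _, Finset.sum_pos' (fun j _ => hterm i j)
      ⟨i, mem_univ _, mul_pos (mul_pos hi hi) (exp_pos _)⟩⟩

lemma OmegaStar_eq_of_isMinOn {α₀ : Fin d → ℝ} (hα₀ : α₀ ∈ simplexS d)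
    (hmin : IsMinOn (fun α => Phi C α f) (simplexS d) α₀) :
    OmegaStar C f = -log (Phi C α₀ f) := by
  have hleast : IsLeast ((fun α => Phi C α f) '' simplexS d) (Phi C α₀ f) :=
    ⟨mem_image_of_mem _ hα₀, forall_mem_image.2 fun _ hα => hmin hα⟩
  rw [OmegaStar, hleast.csInf_eq]

lemma sum_exp_eq_Phi_softmax_mul (l : Fin d → ℝ) :
    ∑ i, ∑ j, exp (l i + l j - (f i + f j + C i j) / 2) =
      Phi C (softmax l) f * (∑ k, exp (l k)) ^ 2 := by
  simp only [Phi, softmax, Finset.sum_mul]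
  refine Finset.sum_congr rfl fun i _ => Finset.sum_congr rfl fun j _ => ?_
  have : Nonempty (Fin d) := ⟨i⟩
  have hB : (∑ k, exp (l k)) ≠ 0 := (sum_exp_pos l).ne'
  rw [show l i + l j - (f i + f j + C i j) / 2 = l i + l j + -(f i + f j + C i j) / 2 by ring,
    exp_add, exp_add]
  field_simp

lemma neg_log_Phi_softmax [Nonempty (Fin d)] (l : Fin d → ℝ) :
    -log (∑ i, ∑ j, exp (l i + l j - (f i + f j + C i j) / 2)) + 2 * log (∑ i, exp (l i)) =
      -log (Phi C (softmax l) f) := by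
  rw [sum_exp_eq_Phi_softmax_mul, log_mul (Phi_pos C f (softmax_mem_stdSimplex l)).ne'
    (pow_pos (sum_exp_pos l) 2).ne', log_pow]
  push_cast
  ring

end Phi

theorem gLSE_log_space_representation (d : ℕ) (hd : 1 ≤ d)
    (C : Matrix (Fin d) (Fin d) ℝ) (f : Fin d → ℝ) :
    OmegaStar C f = ⨆ l : Fin d → ℝ,
      (-Real.log (∑ i, ∑ j, Real.exp (l i + l j - (f i + f j + C i j) / 2))
        + 2 * Real.log (∑ i, Real.exp (l i))) := by
  have : Nonempty (Fin d) := ⟨⟨0, hd⟩⟩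
  obtain ⟨α₀, hα₀, hmin⟩ := (isCompact_stdSimplex ℝ (Fin d)).exists_isMinOn
    ⟨_, softmax_mem_stdSimplex 0⟩ (continuous_Phi C f).continuousOn
  have hcont : ContinuousOn (fun α => -log (Phi C α f)) (simplexS d) :=
    ((continuous_Phi C f).continuousOn.log fun α hα => (Phi_pos C f hα).ne').neg
  have hmax : IsGreatest ((fun α => -log (Phi C α f)) '' simplexS d) (-log (Phi C α₀ f)) :=
    ⟨mem_image_of_mem _ hα₀, forall_mem_image.2 fun _ hα =>
      neg_le_neg (log_le_log (Phi_pos C f hα₀) (hmin hα))⟩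
  simp_rw [neg_log_Phi_softmax C f]
  rw [OmegaStar_eq_of_isMinOn C f hα₀ hmin,
    (isLUB_range_comp_softmax hcont hmax.isLUB).ciSup_eq]
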